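/- arXiv:1007.0804 — 3 statements merged into one kernel-verified Lean document; each statement's English description precedes it below -/
import Mathlib

section
/- Let T be a caterpillar whose longest path has vertices v_1,...,v_l in order, with l ≥ 3. Then T has an overlap representation of size l. -/
/-!
Number the spine `v₀, …, vₙ` (so `n + 1 = l`). Give `vᵢ` the set `{1, …, i, i + 2}` for
`0 < i < n`, give `v₀` the set `{1, 2}` and `vₙ` the set `{1, …, n}`, and give a leaf hanging
from `vₖ` the interval `{1, …, k + 1}`. Consecutive spine sets overlap, and a spine set is
contained in every spine set at distance at least two after it; a leaf interval overlaps the set of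
its own spine vertex, contains the sets of earlier ones and is contained in those of later ones;
leaf intervals are nested. As the spine is a longest path, no leaf hangs from `v₀` or `vₙ`, so
every set lies in `{1, …, n + 1}`. In a tree a path has no chords and an off-path vertex has at
most one neighbour on it, so this is exactly the adjacency of `T`.
-/

/-- An overlap representation of `G`: vertices are adjacent iff their assigned
finite sets intersect and neither is contained in the other. -/
def IsOverlapRep {V : Type*} (G : SimpleGraph V) (f : V → Finset ℕ) : Prop :=
  ∀ u v : V, u ≠ v →
    (G.Adj u v ↔ ((f u ∩ f v).Nonempty ∧ ¬ f u ⊆ f v ∧ ¬ f v ⊆ f u))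

/-- A pure overlap representation: adjacency iff intersection, and no assigned
set contains another. -/
def IsPureOverlapRep {V : Type*} (G : SimpleGraph V) (f : V → Finset ℕ) : Prop :=
  (∀ u v : V, u ≠ v → (G.Adj u v ↔ (f u ∩ f v).Nonempty)) ∧
  (∀ u v : V, u ≠ v → ¬ f u ⊆ f v)

/-- The size of a representation: cardinality of the union of the assigned sets. -/
noncomputable def repSize {V : Type*} (f : V → Finset ℕ) : ℕ :=
  (⋃ v, (f v : Set ℕ)).ncard

/-- The overlap number of `G`. -/
noncomputable def overlapNumber {V : Type*} (G : SimpleGraph V) : ℕ :=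
  sInf {n | ∃ f : V → Finset ℕ, IsOverlapRep G f ∧ repSize f = n}

/-- The pure overlap number of `G`. -/
noncomputable def pureOverlapNumber {V : Type*} (G : SimpleGraph V) : ℕ :=
  sInf {n | ∃ f : V → Finset ℕ, IsPureOverlapRep G f ∧ repSize f = n}

namespace Finset

variable {α : Type*} [DecidableEq α] {A B : Finset α}

def Overlaps (A B : Finset α) : Prop :=
  (A ∩ B).Nonempty ∧ ¬A ⊆ B ∧ ¬B ⊆ A

theorem overlaps_comm : A.Overlaps B ↔ B.Overlaps A := by
  rw [Overlaps, Overlaps, inter_comm, and_comm (a := ¬A ⊆ B)]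

theorem Overlaps.of_mem {a b c : α} (ha : a ∈ A ∧ a ∈ B) (hb : b ∈ A ∧ b ∉ B)
    (hc : c ∈ B ∧ c ∉ A) : A.Overlaps B :=
  ⟨⟨a, mem_inter.2 ha⟩, fun h => hb.2 (h hb.1), fun h => hc.2 (h hc.1)⟩

theorem not_overlaps_of_subset (h : A ⊆ B) : ¬A.Overlaps B :=
  fun hAB => hAB.2.1 h

theorem not_overlaps_of_superset (h : B ⊆ A) : ¬A.Overlaps B :=
  fun hAB => hAB.2.2 h

end Finset

namespace Caterpillar

open Finset

/-- `inl i` stands for the `i`-th spine vertex and `inr k` for a leaf hanging from spine vertex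
`k`. -/
def Adj : ℕ ⊕ ℕ → ℕ ⊕ ℕ → Prop
  | .inl i, .inl j => i = j + 1 ∨ j = i + 1
  | .inl i, .inr k => i = k
  | .inr k, .inl i => i = k
  | .inr _, .inr _ => False

def IsLabel (n : ℕ) : ℕ ⊕ ℕ → Prop
  | .inl i => i ≤ n
  | .inr k => 0 < k ∧ k < n

def spineSet (n i : ℕ) : Finset ℕ :=
  Icc 1 (max i 1) ∪ if i < n then {i + 2} else ∅

def overlapSet (n : ℕ) : ℕ ⊕ ℕ → Finset ℕ
  | .inl i => spineSet n i
  | .inr k => Icc 1 (k + 1)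

variable {n i j k m : ℕ}

theorem mem_spineSet : m ∈ spineSet n i ↔ 1 ≤ m ∧ m ≤ max i 1 ∨ i < n ∧ m = i + 2 := by
  unfold spineSet
  split_ifs with h <;> simp only [mem_union, mem_Icc, mem_singleton, notMem_empty] <;> tauto

theorem spineSet_subset_Icc (hi : i ≤ n) : spineSet n i ⊆ Icc 1 (n + 1) := by
  intro m hm
  rw [mem_spineSet] at hm
  rw [mem_Icc]
  omega

theorem overlaps_spineSet_succ (hn : 2 ≤ n) (hi : i < n) :
    (spineSet n i).Overlaps (spineSet n (i + 1)) := by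
  obtain rfl | hi0 := Nat.eq_zero_or_pos i
  · refine Overlaps.of_mem (a := 1) (b := 2) (c := 3) ?_ ?_ ?_ <;>
      rw [mem_spineSet, mem_spineSet] <;> omega
  · refine Overlaps.of_mem (a := 1) (b := i + 2) (c := i + 1) ?_ ?_ ?_ <;>
      rw [mem_spineSet, mem_spineSet] <;> omega

theorem overlaps_spineSet_iff (hn : 2 ≤ n) (hi : i ≤ n) (hj : j ≤ n) :
    (spineSet n i).Overlaps (spineSet n j) ↔ i = j + 1 ∨ j = i + 1 := by
  wlog hij : i ≤ j generalizing i j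
  · rw [overlaps_comm, this hj hi (by omega), or_comm]
  obtain rfl | hj' := eq_or_ne j (i + 1)
  · simpa using overlaps_spineSet_succ hn (by omega)
  · refine iff_of_false (not_overlaps_of_subset fun m hm => ?_) (by omega)
    rw [mem_spineSet] at hm ⊢
    omega

theorem overlaps_spineSet_Icc_iff (hk : 0 < k) (hkn : k < n) :
    (spineSet n i).Overlaps (Icc 1 (k + 1)) ↔ i = k := by
  rcases lt_trichotomy i k with hik | rfl | hik
  · refine iff_of_false (not_overlaps_of_subset fun m hm => ?_) hik.ne
    rw [mem_spineSet] at hm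
    rw [mem_Icc]
    omega
  · refine iff_of_true (Overlaps.of_mem (a := 1) (b := i + 2) (c := i + 1) ?_ ?_ ?_) rfl <;>
      rw [mem_spineSet, mem_Icc] <;> omega
  · refine iff_of_false (not_overlaps_of_superset fun m hm => ?_) hik.ne'
    rw [mem_Icc] at hm
    rw [mem_spineSet]
    omega

theorem overlaps_overlapSet_iff (hn : 2 ≤ n) {s t : ℕ ⊕ ℕ} (hs : IsLabel n s) (ht : IsLabel n t) :
    (overlapSet n s).Overlaps (overlapSet n t) ↔ Adj s t := by
  match s, t, hs, ht with
  | .inl i, .inl j, hi, hj => exact overlaps_spineSet_iff hn hi hj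
  | .inl i, .inr k, _, ⟨hk, hkn⟩ => exact overlaps_spineSet_Icc_iff hk hkn
  | .inr k, .inl i, ⟨hk, hkn⟩, _ => exact overlaps_comm.trans (overlaps_spineSet_Icc_iff hk hkn)
  | .inr k, .inr k', _, _ =>
    refine iff_of_false (fun h => ?_) id
    rcases le_total k k' with hkk | hkk
    · exact not_overlaps_of_subset (Icc_subset_Icc_right (by omega)) h
    · exact not_overlaps_of_superset (Icc_subset_Icc_right (by omega)) h

theorem overlapSet_subset_Icc {s : ℕ ⊕ ℕ} (hs : IsLabel n s) : overlapSet n s ⊆ Icc 1 (n + 1) := by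
  match s, hs with
  | .inl i, hi => exact spineSet_subset_Icc hi
  | .inr k, ⟨_, hkn⟩ => exact Icc_subset_Icc_right (by omega)

theorem Icc_subset_spineSet_union (hn : 0 < n) :
    Icc 1 (n + 1) ⊆ spineSet n n ∪ spineSet n (n - 1) := by
  intro m hm
  rw [mem_Icc] at hm
  rw [mem_union, mem_spineSet, mem_spineSet]
  omega

theorem iUnion_overlapSet {ι : Type*} {ℓ : ι → ℕ ⊕ ℕ} (hn : 0 < n) (hℓ : ∀ v, IsLabel n (ℓ v))
    (hspine : ∀ i ≤ n, ∃ v, ℓ v = .inl i) :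
    ⋃ v, (overlapSet n (ℓ v) : Set ℕ) = Icc 1 (n + 1) := by
  refine subset_antisymm (Set.iUnion_subset fun v => coe_subset.2 (overlapSet_subset_Icc (hℓ v))) ?_
  obtain ⟨u, hu⟩ := hspine n le_rfl
  obtain ⟨w, hw⟩ := hspine (n - 1) (Nat.sub_le n 1)
  calc (Icc 1 (n + 1) : Set ℕ) ⊆ overlapSet n (ℓ u) ∪ overlapSet n (ℓ w) := by
        rw [hu, hw]
        exact_mod_cast Icc_subset_spineSet_union hn
    _ ⊆ ⋃ v, (overlapSet n (ℓ v) : Set ℕ) :=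
        Set.union_subset (Set.subset_iUnion_of_subset u subset_rfl)
          (Set.subset_iUnion_of_subset w subset_rfl)

end Caterpillar

namespace SimpleGraph

variable {V : Type*} {G : SimpleGraph V} {x y : V}

theorem Walk.IsPath.exists_isPath_subset {p : G.Walk x y} (hp : p.IsPath) {a b : V}
    (ha : a ∈ p.support) (hb : b ∈ p.support) :
    ∃ q : G.Walk a b, q.IsPath ∧ q.support ⊆ p.support ∧ q.edges ⊆ p.edges := by
  classical
  obtain ⟨c, r, hr, hrs, hre, hbr⟩ : ∃ (c : V) (r : G.Walk a c),
      r.IsPath ∧ r.support ⊆ p.support ∧ r.edges ⊆ p.edges ∧ b ∈ r.support := by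
    rw [← p.take_spec ha, Walk.mem_support_append_iff] at hb
    rcases hb with hb | hb
    · refine ⟨x, (p.takeUntil a ha).reverse, (hp.takeUntil ha).reverse, ?_, ?_, by simpa using hb⟩
      · simpa using p.support_takeUntil_subset_support ha
      · simpa using p.edges_takeUntil_subset_edges ha
    · exact ⟨y, p.dropUntil a ha, hp.dropUntil ha, p.support_dropUntil_subset_support ha,
        p.edges_dropUntil_subset_edges ha, hb⟩
  exact ⟨r.takeUntil b hbr, hr.takeUntil hbr,
    List.Subset.trans (r.support_takeUntil_subset_support hbr) hrs,
    List.Subset.trans (r.edges_takeUntil_subset_edges hbr) hre⟩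

theorem IsAcyclic.isChordless (hG : G.IsAcyclic) {p : G.Walk x y} (hp : p.IsPath) :
    p.IsChordless := by
  rw [Walk.isChordless_iff_forall_mem_edges]
  intro a b ha hb hab
  obtain ⟨q, hq, -, hqe⟩ := hp.exists_isPath_subset ha hb
  have hsnd : b = q.snd := hG.eq_snd_of_adj_start hq hab q.end_mem_support
  have hedge := q.mk_start_snd_mem_edges (Walk.not_nil_of_ne hab.ne)
  rw [← hsnd] at hedge
  exact hqe hedge

theorem Walk.IsChordless.adj_getVert_iff {p : G.Walk x y} (hc : p.IsChordless) (hp : p.IsPath)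
    {i j : ℕ} (hi : i ≤ p.length) (hj : j ≤ p.length) :
    G.Adj (p.getVert i) (p.getVert j) ↔ i = j + 1 ∨ j = i + 1 := by
  refine ⟨fun h => ?_, ?_⟩
  · obtain ⟨k, hk, hkij⟩ := p.mk_mem_edges_iff_exists.1
      (hc.mem_edges (p.getVert_mem_support i) (p.getVert_mem_support j) h)
    rcases Sym2.eq_iff.1 hkij with ⟨h1, h2⟩ | ⟨h1, h2⟩
    · have := hp.getVert_injOn hk.le hi h1
      have := hp.getVert_injOn hk hj h2
      omega
    · have := hp.getVert_injOn hk.le hj h1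
      have := hp.getVert_injOn hk hi h2
      omega
  · rintro (rfl | rfl)
    · exact (p.adj_getVert_succ (by omega)).symm
    · exact p.adj_getVert_succ (by omega)

theorem IsAcyclic.eq_of_adj_of_notMem_support (hG : G.IsAcyclic) {p : G.Walk x y}
    (hp : p.IsPath) {w a b : V} (hw : w ∉ p.support) (ha : a ∈ p.support) (hb : b ∈ p.support)
    (hwa : G.Adj w a) (hwb : G.Adj w b) : a = b := by
  obtain ⟨q, hq, hqs, -⟩ := hp.exists_isPath_subset ha hb
  have := hG.eq_snd_of_adj_start (hq.cons (h := hwa) fun h => hw (hqs h)) hwb (by simp)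
  simpa using this.symm

theorem Walk.IsPath.not_adj_start_of_longest {p : G.Walk x y} (hp : p.IsPath)
    (hlongest : ∀ (a b : V) (q : G.Walk a b), q.IsPath → q.length ≤ p.length) {w : V}
    (hw : w ∉ p.support) : ¬G.Adj w x := fun h => by
  simpa using hlongest _ _ _ (hp.cons (h := h) hw)

theorem Walk.IsPath.not_adj_end_of_longest {p : G.Walk x y} (hp : p.IsPath)
    (hlongest : ∀ (a b : V) (q : G.Walk a b), q.IsPath → q.length ≤ p.length) {w : V}
    (hw : w ∉ p.support) : ¬G.Adj w y :=
  hp.reverse.not_adj_start_of_longest (by simpa using hlongest) (by simpa using hw)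

end SimpleGraph

namespace Caterpillar

open SimpleGraph

variable {V : Type*} {G : SimpleGraph V} {x y : V} {p : G.Walk x y}

theorem exists_adj_mem_support (hconn : G.Connected)
    (hcat : ∀ e ∈ G.edgeSet, ∃ v ∈ p.support, v ∈ e) {w : V} (hw : w ∉ p.support) :
    ∃ a ∈ p.support, G.Adj w a := by
  obtain ⟨r⟩ := hconn w x
  have hr : ¬r.Nil := Walk.not_nil_of_ne fun h => hw (h ▸ p.start_mem_support)
  obtain ⟨v, hv, hve⟩ := hcat s(w, r.snd) (r.adj_snd hr)
  rcases Sym2.mem_iff.1 hve with rfl | rfl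
  · exact absurd hv hw
  · exact ⟨_, hv, r.adj_snd hr⟩

theorem not_adj_of_notMem_support (hcat : ∀ e ∈ G.edgeSet, ∃ v ∈ p.support, v ∈ e) {u w : V}
    (hu : u ∉ p.support) (hw : w ∉ p.support) : ¬G.Adj u w := fun h => by
  obtain ⟨v, hv, hve⟩ := hcat s(u, w) h
  rcases Sym2.mem_iff.1 hve with rfl | rfl <;> contradiction

def Locates (p : G.Walk x y) (v : V) : ℕ ⊕ ℕ → Prop
  | .inl i => i ≤ p.length ∧ p.getVert i = v
  | .inr k => k ≤ p.length ∧ v ∉ p.support ∧ G.Adj v (p.getVert k)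

theorem exists_locates (hT : G.IsTree) (hp : p.IsPath)
    (hlongest : ∀ (a b : V) (q : G.Walk a b), q.IsPath → q.length ≤ p.length)
    (hcat : ∀ e ∈ G.edgeSet, ∃ v ∈ p.support, v ∈ e) (v : V) :
    ∃ s, IsLabel p.length s ∧ Locates p v s := by
  by_cases hv : v ∈ p.support
  · obtain ⟨i, hiv, hi⟩ := Walk.mem_support_iff_exists_getVert.1 hv
    exact ⟨.inl i, hi, hi, hiv⟩
  · obtain ⟨a, ha, hva⟩ := exists_adj_mem_support hT.connected hcat hv
    obtain ⟨k, rfl, hk⟩ := Walk.mem_support_iff_exists_getVert.1 ha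
    refine ⟨.inr k, ⟨Nat.pos_of_ne_zero ?_, lt_of_le_of_ne hk ?_⟩, hk, hv, hva⟩
    · rintro rfl
      exact hp.not_adj_start_of_longest hlongest hv (by simpa using hva)
    · rintro rfl
      exact hp.not_adj_end_of_longest hlongest hv (by simpa using hva)

theorem locates_getVert_iff (hp : p.IsPath) {i : ℕ} (hi : i ≤ p.length) {s : ℕ ⊕ ℕ} :
    Locates p (p.getVert i) s ↔ s = .inl i := by
  refine ⟨fun h => ?_, by rintro rfl; exact ⟨hi, rfl⟩⟩
  rcases s with j | k
  · rw [hp.getVert_injOn h.1 hi h.2]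
  · exact absurd (p.getVert_mem_support i) h.2.1

theorem adj_getVert_iff_of_locates (hG : G.IsAcyclic) (hp : p.IsPath) {i k : ℕ} {v : V}
    (hi : i ≤ p.length) (hv : Locates p v (.inr k)) : G.Adj (p.getVert i) v ↔ i = k := by
  obtain ⟨hk, hv, hvk⟩ := hv
  refine ⟨fun h => hp.getVert_injOn hi hk ?_, by rintro rfl; exact hvk.symm⟩
  exact hG.eq_of_adj_of_notMem_support hp hv (p.getVert_mem_support i)
    (p.getVert_mem_support k) h.symm hvk

theorem adj_iff_of_locates (hG : G.IsAcyclic) (hp : p.IsPath)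
    (hcat : ∀ e ∈ G.edgeSet, ∃ v ∈ p.support, v ∈ e) {u v : V} {s t : ℕ ⊕ ℕ}
    (hu : Locates p u s) (hv : Locates p v t) : G.Adj u v ↔ Adj s t := by
  rcases s with i | k <;> rcases t with j | k'
  · obtain ⟨hi, rfl⟩ := hu
    obtain ⟨hj, rfl⟩ := hv
    exact (hG.isChordless hp).adj_getVert_iff hp hi hj
  · obtain ⟨hi, rfl⟩ := hu
    exact adj_getVert_iff_of_locates hG hp hi hv
  · obtain ⟨hj, rfl⟩ := hv
    rw [G.adj_comm]
    exact adj_getVert_iff_of_locates hG hp hj hu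
  · exact iff_of_false (not_adj_of_notMem_support hcat hu.2.1 hv.2.1) id

end Caterpillar

open Caterpillar

theorem stmt_4_general {V : Type*} (T : SimpleGraph V) (hT : T.IsTree)
    (x y : V) (p : T.Walk x y) (hp : p.IsPath)
    (hlongest : ∀ (a b : V) (q : T.Walk a b), q.IsPath → q.length ≤ p.length)
    (hcat : ∀ e ∈ T.edgeSet, ∃ w ∈ p.support, w ∈ e)
    (hl : 3 ≤ p.length + 1) :
    ∃ f : V → Finset ℕ, IsOverlapRep T f ∧ repSize f = p.length + 1 := by
  choose ℓ hℓ hloc using exists_locates hT hp hlongest hcat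
  refine ⟨fun v => overlapSet p.length (ℓ v), fun u v _ => ?_, ?_⟩
  · rw [adj_iff_of_locates hT.isAcyclic hp hcat (hloc u) (hloc v)]
    exact (overlaps_overlapSet_iff (by omega) (hℓ u) (hℓ v)).symm
  · have hspine (i : ℕ) (hi : i ≤ p.length) : ∃ v, ℓ v = .inl i :=
      ⟨p.getVert i, (locates_getVert_iff hp hi).1 (hloc _)⟩
    rw [repSize, iUnion_overlapSet (by omega) hℓ hspine, Set.ncard_coe_finset, Nat.card_Icc]
    omega

theorem stmt_4 {V : Type*} [Fintype V] (T : SimpleGraph V) (hT : T.IsTree)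
    (x y : V) (p : T.Walk x y) (hp : p.IsPath)
    (hlongest : ∀ (a b : V) (q : T.Walk a b), q.IsPath → q.length ≤ p.length)
    (hcat : ∀ e ∈ T.edgeSet, ∃ w ∈ p.support, w ∈ e)
    (hl : 3 ≤ p.length + 1) :
    ∃ f : V → Finset ℕ, IsOverlapRep T f ∧ repSize f = p.length + 1 :=
  stmt_4_general T hT x y p hp hlongest hcat hl
end

section
/- If v is a vertex of degree at most 2 in a graph G with at least three vertices, then Φ(G) ≤ Φ(G − v) + 2, with strict inequality when v is isolated. -/
/-!
Start from an optimal pure overlap representation of `G - v`; since `G - v` has at least two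
vertices, all its sets are nonempty. Give `v` a set `S` of fresh points and give each neighbour
of `v` its own private point of `S`. Fresh points never create intersections or containments
among old vertices, `v` meets exactly its neighbours, no old set fits inside `S` (it is
nonempty and disjoint from `S`), and `S` fits inside no set as soon as `|S| ≥ 2` (or `S ≠ ∅`
when `v` is isolated). So two fresh points suffice when `deg v ≤ 2`, and one when `v` is
isolated.
-/

open Function

section

variable {V : Type*}

theorem pureOverlapNumber_le_repSize {G : SimpleGraph V} {f : V → Finset ℕ}
    (hf : IsPureOverlapRep G f) : pureOverlapNumber G ≤ repSize f :=
  Nat.sInf_le ⟨f, hf, rfl⟩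

theorem exists_isPureOverlapRep [Fintype V] (G : SimpleGraph V) :
    ∃ f : V → Finset ℕ, IsPureOverlapRep G f := by
  classical
  let rep (u : V) : Finset (V ⊕ Sym2 V) := insert (.inl u) ((G.incidenceFinset u).map .inr)
  let ι : V ⊕ Sym2 V ↪ ℕ := (Fintype.equivFin _).toEmbedding.trans Fin.valEmbedding
  have mem_rep (u : V) (x : V ⊕ Sym2 V) :
      x ∈ rep u ↔ x = .inl u ∨ ∃ e ∈ G.incidenceSet u, x = .inr e := by
    simp [rep, eq_comm]
  refine ⟨fun u => (rep u).map ι, fun u w huw => ?_, fun u w huw h => ?_⟩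
  · rw [← Finset.map_inter, Finset.map_nonempty]
    constructor
    · intro hadj
      refine ⟨.inr s(u, w), Finset.mem_inter.2 ⟨?_, ?_⟩⟩
      · exact (mem_rep _ _).2 (.inr ⟨_, G.mk'_mem_incidenceSet_left_iff.2 hadj, rfl⟩)
      · exact (mem_rep _ _).2 (.inr ⟨_, G.mk'_mem_incidenceSet_right_iff.2 hadj, rfl⟩)
    · rintro ⟨x, hx⟩
      rw [Finset.mem_inter, mem_rep, mem_rep] at hx
      rcases hx with ⟨rfl | ⟨e, he, rfl⟩, h | ⟨e', he', h⟩⟩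
      · exact absurd (Sum.inl_injective h) huw
      · cases h
      · cases h
      · obtain rfl := Sum.inr_injective h
        exact G.adj_of_mem_incidenceSet huw he he'
  · rw [Finset.map_subset_map] at h
    simpa [mem_rep, huw] using h (Finset.mem_insert_self _ _)

theorem exists_isPureOverlapRep_repSize_eq [Fintype V] (G : SimpleGraph V) :
    ∃ f : V → Finset ℕ, IsPureOverlapRep G f ∧ repSize f = pureOverlapNumber G := by
  obtain ⟨f, hf⟩ := exists_isPureOverlapRep G
  exact Nat.sInf_mem (s := {n | ∃ f : V → Finset ℕ, IsPureOverlapRep G f ∧ repSize f = n})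
    ⟨_, f, hf, rfl⟩

theorem IsPureOverlapRep.nonempty [Nontrivial V] {G : SimpleGraph V} {f : V → Finset ℕ}
    (hf : IsPureOverlapRep G f) (u : V) : (f u).Nonempty := by
  obtain ⟨w, hwu⟩ := exists_ne u
  rw [Finset.nonempty_iff_ne_empty]
  intro hu
  exact hf.2 u w hwu.symm (hu ▸ Finset.empty_subset _)

theorem IsPureOverlapRep.union_of_disjoint {G : SimpleGraph V} {f E : V → Finset ℕ}
    (hf : IsPureOverlapRep G f) (hfE : ∀ u w, Disjoint (f u) (E w))
    (hE : Pairwise (Disjoint on E)) : IsPureOverlapRep G fun u => f u ∪ E u := by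
  have inter_eq {u w : V} (huw : u ≠ w) : (f u ∪ E u) ∩ (f w ∪ E w) = f u ∩ f w := by
    rw [Finset.union_inter_distrib_right, Finset.inter_union_distrib_left,
      Finset.inter_union_distrib_left, Finset.disjoint_iff_inter_eq_empty.1 (hfE u w),
      Finset.disjoint_iff_inter_eq_empty.1 (hfE w u).symm,
      Finset.disjoint_iff_inter_eq_empty.1 (hE huw)]
    simp
  refine ⟨fun u w huw => inter_eq huw ▸ hf.1 u w huw, fun u w huw h => hf.2 u w huw ?_⟩
  exact Disjoint.left_le_of_le_sup_right (Finset.subset_union_left.trans h) (hfE u w)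

theorem IsPureOverlapRep.of_induce_ne {G : SimpleGraph V} {v : V} {g : V → Finset ℕ}
    (hg : IsPureOverlapRep (G.induce {u | u ≠ v}) fun u => g u)
    (hadj : ∀ u ≠ v, G.Adj v u ↔ (g v ∩ g u).Nonempty)
    (hvu : ∀ u ≠ v, ¬ g v ⊆ g u) (huv : ∀ u ≠ v, ¬ g u ⊆ g v) :
    IsPureOverlapRep G g := by
  refine ⟨fun u w huw => ?_, fun u w huw => ?_⟩
  · rcases eq_or_ne u v with rfl | hu
    · exact hadj w huw.symm
    rcases eq_or_ne w v with rfl | hw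
    · rw [G.adj_comm, Finset.inter_comm]
      exact hadj u hu
    · exact hg.1 ⟨u, hu⟩ ⟨w, hw⟩ (Subtype.coe_ne_coe.1 huw)
  · rcases eq_or_ne u v with rfl | hu
    · exact hvu w huw.symm
    rcases eq_or_ne w v with rfl | hw
    · exact huv u hu
    · exact hg.2 ⟨u, hu⟩ ⟨w, hw⟩ (Subtype.coe_ne_coe.1 huw)

theorem IsPureOverlapRep.exists_extend [Finite V] {G : SimpleGraph V} {v : V}
    {f E : {u | u ≠ v} → Finset ℕ} (hf : IsPureOverlapRep (G.induce {u | u ≠ v}) f)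
    (hne : ∀ u, (f u).Nonempty) {S : Finset ℕ} (hfS : ∀ u, Disjoint (f u) S)
    (hES : ∀ u, E u ⊆ S) (hE : Pairwise (Disjoint on E))
    (hEadj : ∀ u, (E u).Nonempty ↔ G.Adj v u) (hSE : ∀ u, ¬ S ⊆ E u) :
    ∃ g : V → Finset ℕ, IsPureOverlapRep G g ∧ repSize g ≤ repSize f + S.card := by
  classical
  let g (u : V) : Finset ℕ := if h : u = v then S else f ⟨u, h⟩ ∪ E ⟨u, h⟩
  have hgv : g v = S := dif_pos rfl
  have hg (u : {u | u ≠ v}) : g u = f u ∪ E u := dif_neg u.2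
  have hS_inter (u : {u | u ≠ v}) : S ∩ g u = E u := by
    rw [hg, Finset.inter_union_distrib_left, Finset.disjoint_iff_inter_eq_empty.1 (hfS u).symm,
      Finset.empty_union, Finset.inter_eq_right.2 (hES u)]
  refine ⟨g, IsPureOverlapRep.of_induce_ne (v := v) ?_ (fun u hu => ?_) (fun u hu h => ?_)
    (fun u hu h => ?_), ?_⟩
  · simpa only [hg] using hf.union_of_disjoint (fun u w => (hfS u).mono_right (hES w)) hE
  · rw [hgv, hS_inter ⟨u, hu⟩, hEadj]
  · rw [hgv, hg ⟨u, hu⟩] at h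
    exact hSE _ (Disjoint.left_le_of_le_sup_left h (hfS _).symm)
  · rw [hgv, hg ⟨u, hu⟩] at h
    exact (hne _).ne_empty ((hfS _).eq_bot_of_le (Finset.subset_union_left.trans h))
  · have hsub : (⋃ u, (g u : Set ℕ)) ⊆ (⋃ u, (f u : Set ℕ)) ∪ S := by
      refine Set.iUnion_subset fun u => ?_
      rcases eq_or_ne u v with rfl | hu
      · rw [hgv]
        exact Set.subset_union_right
      · rw [hg ⟨u, hu⟩, Finset.coe_union]
        exact Set.union_subset_union (Set.subset_iUnion_of_subset _ subset_rfl)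
          (Finset.coe_subset.2 (hES _))
    calc repSize g ≤ ((⋃ u, (f u : Set ℕ)) ∪ S).ncard :=
          Set.ncard_le_ncard hsub
            ((Set.finite_iUnion fun u => (f u).finite_toSet).union S.finite_toSet)
      _ ≤ repSize f + S.card := by
          rw [← Set.ncard_coe_finset S]
          exact Set.ncard_union_le _ _

theorem Set.Finite.exists_embedding_notMem {A : Set ℕ} (hA : A.Finite) (α : Type*) [Finite α] :
    ∃ ι : α ↪ ℕ, ∀ a, ι a ∉ A := by
  obtain ⟨n, ⟨e⟩⟩ := Finite.exists_equiv_fin α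
  exact ⟨(e.toEmbedding.trans Fin.valEmbedding).trans
    (hA.infinite_compl.natEmbedding.trans (Embedding.subtype _)),
    fun a => (hA.infinite_compl.natEmbedding _ _).2⟩

theorem pureOverlapNumber_le_add_card [Fintype V] {G : SimpleGraph V} {v : V}
    (hV : 3 ≤ Fintype.card V) {T : Finset V} (hT : T.Nonempty)
    (hNT : ∀ u, G.Adj v u → u ∈ T ∧ ∃ w ∈ T, w ≠ u) :
    pureOverlapNumber G ≤ pureOverlapNumber (G.induce {u | u ≠ v}) + T.card := by
  classical
  have : Nontrivial {u | u ≠ v} := by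
    rw [← Finite.one_lt_card_iff_nontrivial, Nat.card_coe_set_eq, ← Set.compl_singleton_eq,
      Set.ncard_compl, Set.ncard_singleton, Nat.card_eq_fintype_card]
    omega
  obtain ⟨f, hf, hf_size⟩ := exists_isPureOverlapRep_repSize_eq (G.induce {u | u ≠ v})
  obtain ⟨ι, hι⟩ := (Set.finite_iUnion fun u => (f u).finite_toSet).exists_embedding_notMem V
  obtain ⟨g, hg, hg_size⟩ := hf.exists_extend hf.nonempty (S := T.map ι)
    (E := fun u => if G.Adj v u then {ι u} else ∅)
    (fun u => Finset.disjoint_left.2 fun z hz hzS => by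
      obtain ⟨w, -, rfl⟩ := Finset.mem_map.1 hzS
      exact hι w (Set.mem_iUnion.2 ⟨u, hz⟩))
    (fun u => by
      split_ifs with h
      · simpa using (hNT u h).1
      · exact Finset.empty_subset _)
    (fun u w huw => by
      dsimp only [onFun]
      split_ifs <;> simp [ι.injective.ne (Subtype.coe_ne_coe.2 huw)])
    (fun u => by split_ifs with h <;> simp [h])
    (fun u hS => by
      split_ifs at hS with h
      · obtain ⟨w, hw, hwu⟩ := (hNT u h).2
        exact hwu (ι.injective (Finset.mem_singleton.1 (hS (Finset.mem_map_of_mem ι hw))))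
      · obtain ⟨t, ht⟩ := hT
        exact Finset.notMem_empty _ (hS (Finset.mem_map_of_mem ι ht)))
  calc pureOverlapNumber G ≤ repSize g := pureOverlapNumber_le_repSize hg
    _ ≤ _ := by rwa [Finset.card_map, hf_size] at hg_size

theorem pureOverlapNumber_le_add_max_two_degree [Fintype V] (G : SimpleGraph V)
    [DecidableRel G.Adj] (v : V) (hV : 3 ≤ Fintype.card V) :
    pureOverlapNumber G ≤ pureOverlapNumber (G.induce {u | u ≠ v}) + max 2 (G.degree v) := by
  obtain ⟨T, hNT, hT⟩ := Finset.exists_superset_card_eq (s := G.neighborFinset v)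
    (n := max 2 (G.degree v)) (le_max_right _ _) (max_le (by omega) (G.degree_lt_card_verts v).le)
  have hT2 : 1 < T.card := by omega
  rw [← hT]
  exact pureOverlapNumber_le_add_card hV (Finset.card_pos.1 (by omega)) fun u hu =>
    ⟨hNT ((G.mem_neighborFinset v u).2 hu), Finset.exists_mem_ne hT2 u⟩

theorem pureOverlapNumber_le_add_one_of_neighborSet_eq_empty [Fintype V] {G : SimpleGraph V}
    {v : V} (hV : 3 ≤ Fintype.card V) (hv : G.neighborSet v = ∅) :
    pureOverlapNumber G ≤ pureOverlapNumber (G.induce {u | u ≠ v}) + 1 :=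
  pureOverlapNumber_le_add_card hV (Finset.singleton_nonempty v) fun u hu =>
    (Set.eq_empty_iff_forall_notMem.1 hv u hu).elim

end

theorem stmt_10 {V : Type*} [Fintype V] (G : SimpleGraph V) (v : V)
    (hdeg : (G.neighborSet v).ncard ≤ 2) (hcard : 3 ≤ Fintype.card V) :
    pureOverlapNumber G ≤ pureOverlapNumber (G.induce {u : V | u ≠ v}) + 2 ∧
    (G.neighborSet v = ∅ →
      pureOverlapNumber G < pureOverlapNumber (G.induce {u : V | u ≠ v}) + 2) := by
  classical
  have hdeg' : G.degree v ≤ 2 := by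
    rwa [← G.card_neighborSet_eq_degree, ← Nat.card_eq_fintype_card, Nat.card_coe_set_eq]
  refine ⟨?_, fun hv => ?_⟩
  · simpa [max_eq_left hdeg'] using pureOverlapNumber_le_add_max_two_degree G v hcard
  · have := pureOverlapNumber_le_add_one_of_neighborSet_eq_empty hcard hv
    omega
end

section
/- If a graph G has a vertex v whose neighborhood is empty or equals the neighborhood of another vertex w ≠ v, then φ(G) = φ(G − v). -/
/-!
Deleting `v` from an overlap representation of `G` gives one of `G - v` that is no larger.
Conversely, a representation of `G - v` extends to `G` without new elements: an isolated `v`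
gets the empty set, which overlaps nothing, and a twin `v` of `w` gets the set of `w`, which
overlaps exactly the sets of the common neighbours (and not itself, matching `¬ G.Adj v w`).
So the two graphs realise the same sizes up to domination, and their infima agree.
-/

section Overlaps

variable {α : Type*} [DecidableEq α]

def Overlaps (s t : Finset α) : Prop :=
  (s ∩ t).Nonempty ∧ ¬ s ⊆ t ∧ ¬ t ⊆ s

theorem Overlaps.symm {s t : Finset α} (h : Overlaps s t) : Overlaps t s :=
  ⟨Finset.inter_comm s t ▸ h.1, h.2.2, h.2.1⟩

theorem overlaps_comm {s t : Finset α} : Overlaps s t ↔ Overlaps t s :=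
  ⟨Overlaps.symm, Overlaps.symm⟩

theorem not_overlaps_self (s : Finset α) : ¬ Overlaps s s :=
  fun h => h.2.1 subset_rfl

theorem not_overlaps_empty_left (t : Finset α) : ¬ Overlaps ∅ t :=
  fun h => by simpa using h.1

end Overlaps

theorem isOverlapRep_iff {V : Type*} {G : SimpleGraph V} {f : V → Finset ℕ} :
    IsOverlapRep G f ↔ ∀ u v : V, u ≠ v → (G.Adj u v ↔ Overlaps (f u) (f v)) :=
  Iff.rfl

theorem Set.iUnion_eq_iUnion_ne_union {V α : Type*} (f : V → Set α) (v : V) :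
    ⋃ u, f u = (⋃ u : {u : V | u ≠ v}, f u) ∪ f v := by
  ext a
  simp only [Set.mem_iUnion, Set.mem_union, Subtype.exists]
  constructor
  · rintro ⟨u, hu⟩
    by_cases huv : u = v
    · exact Or.inr (huv ▸ hu)
    · exact Or.inl ⟨u, huv, hu⟩
  · rintro (⟨u, -, hu⟩ | hv)
    exacts [⟨u, hu⟩, ⟨v, hv⟩]

theorem IsOverlapRep.comap {V W : Type*} {G : SimpleGraph V} {f : V → Finset ℕ}
    (hf : IsOverlapRep G f) (φ : W ↪ V) : IsOverlapRep (G.comap φ) (f ∘ φ) :=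
  fun a b hab => hf (φ a) (φ b) (φ.injective.ne hab)

theorem repSize_restrict_le {V : Type*} (f : V → Finset ℕ) (v : V) :
    repSize (fun u : {u : V | u ≠ v} => f u) ≤ repSize f := by
  unfold repSize
  rw [Set.iUnion_eq_iUnion_ne_union (fun u => (f u : Set ℕ)) v]
  -- an infinite union has `ncard` 0
  by_cases hfin : (⋃ u : {u : V | u ≠ v}, (f u : Set ℕ)).Finite
  · exact Set.ncard_le_ncard Set.subset_union_left (hfin.union (f v).finite_toSet)
  · rw [Set.Infinite.ncard hfin]
    exact Nat.zero_le _

section Extension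

variable {V : Type*} {v : V}

open Classical in
noncomputable def extendAt {β : Type*} (v : V) (s : β) (g : {u : V | u ≠ v} → β) :
    V → β :=
  fun u => if hu : u = v then s else g ⟨u, hu⟩

theorem extendAt_self {β : Type*} {s : β} {g : {u : V | u ≠ v} → β} :
    extendAt v s g v = s :=
  dif_pos rfl

theorem extendAt_of_ne {β : Type*} {s : β} {g : {u : V | u ≠ v} → β} {u : V} (hu : u ≠ v) :
    extendAt v s g u = g ⟨u, hu⟩ :=
  dif_neg hu

variable {G : SimpleGraph V} {s : Finset ℕ} {g : {u : V | u ≠ v} → Finset ℕ}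

theorem repSize_extendAt (hs : (s : Set ℕ) ⊆ ⋃ x, (g x : Set ℕ)) :
    repSize (extendAt v s g) = repSize g := by
  unfold repSize
  have hrest (x : {u : V | u ≠ v}) : ((extendAt v s g x : Finset ℕ) : Set ℕ) = g x := by
    rw [extendAt_of_ne x.2]
  rw [Set.iUnion_eq_iUnion_ne_union _ v, extendAt_self, Set.iUnion_congr hrest,
    Set.union_eq_left.mpr hs]

theorem isOverlapRep_extendAt (hg : IsOverlapRep (G.induce {u | u ≠ v}) g)
    (hs : ∀ u (hu : u ≠ v), G.Adj v u ↔ Overlaps s (g ⟨u, hu⟩)) :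
    IsOverlapRep G (extendAt v s g) := by
  refine isOverlapRep_iff.mpr fun a b hab => ?_
  by_cases ha : a = v
  · subst ha
    rw [extendAt_self, extendAt_of_ne (Ne.symm hab)]
    exact hs b (Ne.symm hab)
  by_cases hb : b = v
  · subst hb
    rw [extendAt_self, extendAt_of_ne ha, G.adj_comm, overlaps_comm]
    exact hs a ha
  · rw [extendAt_of_ne ha, extendAt_of_ne hb]
    exact hg ⟨a, ha⟩ ⟨b, hb⟩ (Subtype.coe_ne_coe.mp hab)

theorem isOverlapRep_extendAt_empty (hg : IsOverlapRep (G.induce {u | u ≠ v}) g)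
    (hv : G.neighborSet v = ∅) : IsOverlapRep G (extendAt v ∅ g) :=
  isOverlapRep_extendAt hg fun u _ =>
    iff_of_false (Set.eq_empty_iff_forall_notMem.mp hv u) (not_overlaps_empty_left _)

theorem isOverlapRep_extendAt_twin (hg : IsOverlapRep (G.induce {u | u ≠ v}) g) {w : V}
    (hw : w ≠ v) (hN : G.neighborSet w = G.neighborSet v) :
    IsOverlapRep G (extendAt v (g ⟨w, hw⟩) g) := by
  have hadj (u : V) : G.Adj v u ↔ G.Adj w u := (Set.ext_iff.mp hN u).symm
  refine isOverlapRep_extendAt hg fun u hu => ?_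
  by_cases huw : u = w
  · subst huw
    exact iff_of_false (fun h => G.loopless.irrefl u ((hadj u).1 h)) (not_overlaps_self _)
  · exact (hadj u).trans (hg ⟨w, hw⟩ ⟨u, hu⟩ (Subtype.coe_ne_coe.mp (Ne.symm huw)))

end Extension

theorem stmt_11 {V : Type*} (G : SimpleGraph V) (v : V)
    (h : G.neighborSet v = ∅ ∨ ∃ w : V, w ≠ v ∧ G.neighborSet w = G.neighborSet v) :
    overlapNumber G = overlapNumber (G.induce {u : V | u ≠ v}) := by
  refine csInf_eq_csInf_of_forall_exists_le ?_ ?_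
  · rintro _ ⟨f, hf, rfl⟩
    exact ⟨_, ⟨_, hf.comap (Function.Embedding.subtype _), rfl⟩, repSize_restrict_le f v⟩
  · rintro _ ⟨g, hg, rfl⟩
    rcases h with hv | ⟨w, hw, hN⟩
    · exact ⟨_, ⟨_, isOverlapRep_extendAt_empty hg hv, rfl⟩,
        (repSize_extendAt (by simp)).le⟩
    · exact ⟨_, ⟨_, isOverlapRep_extendAt_twin hg hw hN, rfl⟩,
        (repSize_extendAt (Set.subset_iUnion (fun x => (g x : Set ℕ)) ⟨w, hw⟩)).le⟩
end
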